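/- Let C ∈ ℝ_max^{n×n}, U, V ∈ ℝ_max^{m×n}, b, d ∈ ℝ_max^m, p ∈ ℝ_max^n and q ∈ (ℝ ∪ {+∞})^n, and suppose every finite entry of C, U, V, b, d, p, q is an integer. Define Λ = { λ ∈ ℝ : ∃ x ∈ ℝ^n such that max_j (c_{ij} + x_j) ≤ λ + x_i for all i, p_i ≤ λ + x_i for all i, x_i ≤ λ + q_i for all i with q_i ∈ ℝ, and max( max_j (u_{ij} + x_j), b_i ) ≤ max( max_j (v_{ij} + x_j), d_i ) for all i }. If Λ is nonempty and bounded below, then λ* := inf Λ is a rational number whose denominator is at most n+1; that is, there exists an integer d with 1 ≤ d ≤ n+1 such that d·λ* ∈ ℤ. -/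

import Mathlib

/-!
A two-sided tropical inequality `max_t (a_t + y_t) ≤ max_s (b_s + y_s)` holds iff every finite term
on the left is dominated by some term on the right. Adjoining a coordinate `x₀ = 0` for the
constants and fixing, for every left-hand term, which right-hand term dominates it, the
constraints defining `Λ` become difference constraints `x_u ≤ x_v + c + a λ` on `n + 1` vertices
with `c ∈ ℤ` and `a ∈ {0, 1}`; `Λ` is the finite union of their feasible sets over all such choices.

By the Bellman–Ford cycle criterion, such a system is feasible iff every closed walk `Z` of length
at most `n + 1` has `c(Z) + a(Z) λ ≥ 0`. So a feasible set that is nonempty and bounded below is a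
half-line `[-c(Z) / a(Z), ∞)` with `1 ≤ a(Z) ≤ n + 1`, and `inf Λ` is the endpoint of one of them.
-/

open Set

namespace DiffConstraints

variable {ι α : Type*}

inductive IsWalk (src tgt : α → ι) : ι → ι → List α → Prop
  | nil (u : ι) : IsWalk src tgt u u []
  | cons {a : α} {v : ι} {l : List α} :
      IsWalk src tgt (tgt a) v l → IsWalk src tgt (src a) v (a :: l)

variable {src tgt : α → ι}

namespace IsWalk

theorem append {u v w : ι} {l₁ l₂ : List α} (h₁ : IsWalk src tgt u v l₁)
    (h₂ : IsWalk src tgt v w l₂) : IsWalk src tgt u w (l₁ ++ l₂) := by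
  induction h₁ with
  | nil => exact h₂
  | cons _ ih => exact cons (ih h₂)

theorem exists_split_of_mem {u v z : ι} {l : List α} (h : IsWalk src tgt u v l)
    (hz : z ∈ l.map tgt) :
    ∃ l₁ l₂, l = l₁ ++ l₂ ∧ l₁ ≠ [] ∧ IsWalk src tgt u z l₁ ∧ IsWalk src tgt z v l₂ := by
  induction h with
  | nil => simp at hz
  | @cons a v l h ih =>
    rw [List.map_cons, List.mem_cons] at hz
    rcases hz with rfl | hz
    · exact ⟨[a], l, rfl, List.cons_ne_nil _ _, cons (nil _), h⟩
    · obtain ⟨l₁, l₂, rfl, -, h₁, h₂⟩ := ih hz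
      exact ⟨a :: l₁, l₂, rfl, List.cons_ne_nil _ _, cons h₁, h₂⟩

theorem exists_cycle_of_not_nodup {u v : ι} {l : List α} (h : IsWalk src tgt u v l)
    (hl : ¬ (l.map tgt).Nodup) :
    ∃ z l₁ c l₂, l = l₁ ++ c ++ l₂ ∧ l₁ ≠ [] ∧ c ≠ [] ∧
      IsWalk src tgt u z l₁ ∧ IsWalk src tgt z z c ∧ IsWalk src tgt z v l₂ := by
  induction h with
  | nil => simp at hl
  | @cons a v l h ih =>
    rw [List.map_cons, List.nodup_cons, not_and_or, not_not] at hl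
    rcases hl with hmem | hl
    · obtain ⟨c, l₂, rfl, hc, hcyc, h₂⟩ := h.exists_split_of_mem hmem
      exact ⟨tgt a, [a], c, l₂, rfl, List.cons_ne_nil _ _, hc, cons (nil _), hcyc, h₂⟩
    · obtain ⟨z, l₁, c, l₂, rfl, -, hc, h₁, hcyc, h₂⟩ := ih hl
      exact ⟨z, a :: l₁, c, l₂, rfl, List.cons_ne_nil _ _, hc, cons h₁, hcyc, h₂⟩

theorem exists_cycle [Fintype ι] {u v : ι} {l : List α} (h : IsWalk src tgt u v l)
    (hl : Fintype.card ι < l.length) :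
    ∃ z l₁ c l₂, l = l₁ ++ c ++ l₂ ∧ l₁ ≠ [] ∧ c ≠ [] ∧
      IsWalk src tgt u z l₁ ∧ IsWalk src tgt z z c ∧ IsWalk src tgt z v l₂ :=
  h.exists_cycle_of_not_nodup fun hnd => by
    have := hnd.length_le_card
    rw [List.length_map] at this
    omega

theorem le_add_sum {x : ι → ℝ} {w : α → ℝ} (hx : ∀ a, x (src a) ≤ x (tgt a) + w a)
    {u v : ι} {l : List α} (h : IsWalk src tgt u v l) : x u ≤ x v + (l.map w).sum := by
  induction h with
  | nil => simp
  | @cons a v l _ ih =>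
    rw [List.map_cons, List.sum_cons]
    linarith [hx a]

theorem exists_short_sum_le [Fintype ι] {w : α → ℝ}
    (hcyc : ∀ u c, IsWalk src tgt u u c → c.length ≤ Fintype.card ι → 0 ≤ (c.map w).sum)
    {u v : ι} {l : List α} (h : IsWalk src tgt u v l) :
    ∃ l', IsWalk src tgt u v l' ∧ l'.length ≤ Fintype.card ι ∧
      (l'.map w).sum ≤ (l.map w).sum := by
  induction hN : l.length using Nat.strong_induction_on generalizing u v l with
  | _ N ih =>
    by_cases hshort : l.length ≤ Fintype.card ι
    · exact ⟨l, h, hshort, le_rfl⟩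
    obtain ⟨z, l₁, c, l₂, rfl, hl₁, hc, h₁, hzc, h₂⟩ := h.exists_cycle (not_le.1 hshort)
    have := List.length_pos_iff.2 hl₁
    have := List.length_pos_iff.2 hc
    simp only [List.length_append] at hN
    obtain ⟨c', hc', hc'len, hc'w⟩ := ih c.length (by omega) hzc rfl
    obtain ⟨l', hl', hl'len, hl'w⟩ :=
      ih (l₁ ++ l₂).length (by rw [List.length_append]; omega) (h₁.append h₂) rfl
    refine ⟨l', hl', hl'len, ?_⟩
    have := hcyc z c' hc' hc'len
    simp only [List.map_append, List.sum_append] at hl'w ⊢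
    linarith

end IsWalk

theorem exists_potential_iff [Fintype ι] [Finite α] (w : α → ℝ) :
    (∃ x : ι → ℝ, ∀ a, x (src a) ≤ x (tgt a) + w a) ↔
      ∀ u c, IsWalk src tgt u u c → c.length ≤ Fintype.card ι → 0 ≤ (c.map w).sum := by
  constructor
  · rintro ⟨x, hx⟩ u c hc -
    linarith [hc.le_add_sum hx]
  intro hcyc
  have hmin : ∀ u, ∃ l ∈ {l | ∃ v, IsWalk src tgt u v l ∧ l.length ≤ Fintype.card ι},
      ∀ l' ∈ {l | ∃ v, IsWalk src tgt u v l ∧ l.length ≤ Fintype.card ι},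
        (l.map w).sum ≤ (l'.map w).sum := fun u =>
    Set.exists_min_image _ _
      ((List.finite_length_le α _).subset fun l ⟨_, _, hl⟩ => hl)
      ⟨[], u, .nil u, Nat.zero_le _⟩
  choose best hbest hle using hmin
  refine ⟨fun u => ((best u).map w).sum, fun a => ?_⟩
  obtain ⟨v, hv, -⟩ := hbest (tgt a)
  obtain ⟨l', hl', hl'len, hl'w⟩ := (IsWalk.cons hv).exists_short_sum_le hcyc
  have := hle (src a) l' ⟨v, hl', hl'len⟩
  simp only [List.map_cons, List.sum_cons] at hl'w
  linarith

end DiffConstraints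

theorem setOf_forall_nonneg_eq_Ici {κ : Type*} {K : Set κ} (hK : K.Finite) (c s : κ → ℝ)
    (hs : ∀ k ∈ K, 0 ≤ s k) (hne : {lam : ℝ | ∀ k ∈ K, 0 ≤ c k + s k * lam}.Nonempty)
    (hbdd : BddBelow {lam : ℝ | ∀ k ∈ K, 0 ≤ c k + s k * lam}) :
    ∃ k ∈ K, 0 < s k ∧ {lam : ℝ | ∀ k ∈ K, 0 ≤ c k + s k * lam} = Ici (-c k / s k) := by
  obtain ⟨lam₀, hlam₀⟩ := hne
  have hflat : ∀ k ∈ K, s k = 0 → ∀ lam : ℝ, 0 ≤ c k + s k * lam := fun k hk h0 lam => by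
    simpa [h0] using hlam₀ k hk
  obtain ⟨k₀, ⟨hk₀, hs₀⟩, hmax⟩ : ∃ k₀ ∈ {k ∈ K | 0 < s k}, ∀ k ∈ {k ∈ K | 0 < s k},
      -c k / s k ≤ -c k₀ / s k₀ := by
    refine Set.exists_max_image _ _ (hK.subset fun k hk => hk.1) ?_
    by_contra hempty
    refine not_bddBelow_univ (Set.eq_univ_of_forall (fun lam k hk => ?_) ▸ hbdd)
    exact hflat k hk ((hs k hk).eq_or_lt.resolve_right fun hpos => hempty ⟨k, hk, hpos⟩).symm lam
  refine ⟨k₀, hk₀, hs₀, Set.ext fun lam => ⟨fun h => ?_, fun h k hk => ?_⟩⟩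
  · have := h k₀ hk₀
    rw [mem_Ici, div_le_iff₀ hs₀]
    linarith
  · rcases (hs k hk).eq_or_lt with h0 | hpos
    · exact hflat k hk h0.symm lam
    · have := (hmax k ⟨hk, hpos⟩).trans h
      rw [div_le_iff₀ hpos] at this
      linarith

theorem csInf_iUnion_mem_of_eq_Ici {κ : Type*} [Finite κ] {F : κ → Set ℝ} {R : Set ℝ}
    (hF : ∀ k, (F k).Nonempty → BddBelow (F k) → ∃ r ∈ R, F k = Ici r)
    (hne : (⋃ k, F k).Nonempty) (hbdd : BddBelow (⋃ k, F k)) : sInf (⋃ k, F k) ∈ R := by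
  have hF' : ∀ k, (F k).Nonempty → ∃ r ∈ R, F k = Ici r := fun k hk =>
    hF k hk (hbdd.mono (subset_iUnion F k))
  have hclosed : IsClosed (⋃ k, F k) := isClosed_iUnion_of_finite fun k => by
    rcases (F k).eq_empty_or_nonempty with hk | hk
    · exact hk ▸ isClosed_empty
    · obtain ⟨r, -, hr⟩ := hF' k hk
      exact hr ▸ isClosed_Ici
  obtain ⟨k, hk⟩ := mem_iUnion.1 (hclosed.csInf_mem hne hbdd)
  obtain ⟨r, hrR, hr⟩ := hF' k ⟨_, hk⟩
  have hle : sInf (⋃ k, F k) ≤ r := csInf_le hbdd (mem_iUnion.2 ⟨k, hr ▸ self_mem_Ici⟩)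
  rw [hr] at hk
  exact le_antisymm hle hk ▸ hrR

def HasDenomLE (N : ℕ) (r : ℝ) : Prop := ∃ k : ℕ, 1 ≤ k ∧ k ≤ N ∧ ∃ z : ℤ, (k : ℝ) * r = z

structure ParamDiffSystem (ι α : Type*) where
  src : α → ι
  tgt : α → ι
  cost : α → ℝ
  slope : α → ℕ

namespace ParamDiffSystem

open DiffConstraints

variable {ι α : Type*} (S : ParamDiffSystem ι α)

def weight (lam : ℝ) (a : α) : ℝ := S.cost a + S.slope a * lam

def feasibleSet : Set ℝ :=
  {lam | ∃ x : ι → ℝ, ∀ a, x (S.src a) ≤ x (S.tgt a) + S.weight lam a}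

def shortCycles [Fintype ι] : Set (List α) :=
  {c | ∃ u, IsWalk S.src S.tgt u u c ∧ c.length ≤ Fintype.card ι}

theorem sum_map_weight (lam : ℝ) (l : List α) :
    (l.map (S.weight lam)).sum = (l.map S.cost).sum + ((l.map S.slope).sum : ℝ) * lam := by
  induction l with
  | nil => simp
  | cons a l ih =>
    simp only [List.map_cons, List.sum_cons, ih, weight]
    push_cast
    ring

theorem feasibleSet_eq [Fintype ι] [Finite α] :
    S.feasibleSet =
      {lam | ∀ c ∈ S.shortCycles, 0 ≤ (c.map S.cost).sum + ((c.map S.slope).sum : ℝ) * lam} := by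
  ext lam
  simp only [feasibleSet, mem_ofPred_eq, exists_potential_iff, ← sum_map_weight, shortCycles]
  exact ⟨fun h c ⟨u, hc, hlen⟩ => h u c hc hlen, fun h u c hc hlen => h c ⟨u, hc, hlen⟩⟩

theorem exists_feasibleSet_eq_Ici [Fintype ι] [Finite α] (hne : S.feasibleSet.Nonempty)
    (hbdd : BddBelow S.feasibleSet) :
    ∃ c ∈ S.shortCycles, 0 < (c.map S.slope).sum ∧
      S.feasibleSet = Ici (-(c.map S.cost).sum / (c.map S.slope).sum) := by
  rw [feasibleSet_eq] at hne hbdd ⊢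
  obtain ⟨c, hc, hpos, h⟩ := setOf_forall_nonneg_eq_Ici
    ((List.finite_length_le α _).subset fun _ ⟨_, _, hc⟩ => hc : S.shortCycles.Finite) _ _
    (fun c _ => Nat.cast_nonneg _) hne hbdd
  exact ⟨c, hc, Nat.cast_pos.1 hpos, h⟩

theorem exists_int_sum_map_cost (hcost : ∀ a, ∃ z : ℤ, S.cost a = z) (l : List α) :
    ∃ z : ℤ, (l.map S.cost).sum = z := by
  induction l with
  | nil => exact ⟨0, by simp⟩
  | cons a l ih =>
    obtain ⟨z, hz⟩ := ih
    obtain ⟨z', hz'⟩ := hcost a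
    exact ⟨z' + z, by simp [hz, hz']⟩

theorem exists_feasibleSet_eq_Ici_hasDenomLE [Fintype ι] [Finite α]
    (hcost : ∀ a, ∃ z : ℤ, S.cost a = z) (hslope : ∀ a, S.slope a ≤ 1)
    (hne : S.feasibleSet.Nonempty) (hbdd : BddBelow S.feasibleSet) :
    ∃ r, HasDenomLE (Fintype.card ι) r ∧ S.feasibleSet = Ici r := by
  obtain ⟨c, ⟨u, -, hlen⟩, hpos, h⟩ := S.exists_feasibleSet_eq_Ici hne hbdd
  obtain ⟨z, hz⟩ := S.exists_int_sum_map_cost hcost c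
  have hslope_le : (c.map S.slope).sum ≤ c.length := by
    simpa using List.sum_le_card_nsmul (c.map S.slope) 1 (by simpa using fun a _ => hslope a)
  refine ⟨_, ⟨_, hpos, hslope_le.trans hlen, -z, ?_⟩, h⟩
  rw [hz]
  field_simp
  push_cast
  ring

/-- Difference constraints are invariant under translation, so one vertex can be pinned to `0`. -/
theorem mem_feasibleSet_iff_option {β : Type*} (S : ParamDiffSystem (Option β) α) (lam : ℝ) :
    lam ∈ S.feasibleSet ↔
      ∃ x : β → ℝ,
        ∀ a, Option.elim' 0 x (S.src a) ≤ Option.elim' 0 x (S.tgt a) + S.weight lam a := by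
  refine ⟨fun ⟨y, hy⟩ => ⟨fun j => y (some j) - y none, fun a => ?_⟩, fun ⟨x, hx⟩ => ⟨_, hx⟩⟩
  have hshift : ∀ t, Option.elim' 0 (fun j => y (some j) - y none) t = y t - y none := by
    rintro (_ | _) <;> simp
  rw [hshift, hshift]
  linarith [hy a]

end ParamDiffSystem

namespace EReal

theorem le_coe_iff_of_ne_top {a : EReal} (ha : a ≠ ⊤) (s : ℝ) :
    a ≤ s ↔ (a ≠ ⊥ → a.toReal ≤ s) := by
  induction a using EReal.rec with
  | bot => simp
  | coe a => simp
  | top => exact absurd rfl ha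

theorem add_coe_le_coe_iff {a : EReal} (ha : a ≠ ⊤) (r s : ℝ) :
    a + r ≤ s ↔ (a ≠ ⊥ → a.toReal + r ≤ s) := by
  induction a using EReal.rec with
  | bot => simp
  | coe a => simp [← EReal.coe_add]
  | top => exact absurd rfl ha

theorem coe_le_add_coe_iff {a : EReal} (ha : a ≠ ⊤) (r s : ℝ) :
    (r : EReal) ≤ a + s ↔ a ≠ ⊥ ∧ r ≤ a.toReal + s := by
  induction a using EReal.rec with
  | bot => simp
  | coe a => simp [← EReal.coe_add]
  | top => exact absurd rfl ha

theorem coe_le_iSup_iff {κ : Type*} [Finite κ] (f : κ → EReal) (r : ℝ) :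
    (r : EReal) ≤ ⨆ k, f k ↔ ∃ k, (r : EReal) ≤ f k := by
  refine ⟨fun h => ?_, fun ⟨k, hk⟩ => hk.trans (le_iSup f k)⟩
  cases isEmpty_or_nonempty κ
  · simp at h
  · obtain ⟨k, hk⟩ := exists_eq_ciSup_of_finite (f := f)
    exact ⟨k, hk ▸ h⟩

theorem iSup_add_coe_le_iSup_add_coe_iff {κ : Type*} [Finite κ] {f g : κ → EReal}
    (hf : ∀ k, f k ≠ ⊤) (hg : ∀ k, g k ≠ ⊤) (y : κ → ℝ) :
    (⨆ k, f k + y k) ≤ ⨆ k, g k + y k ↔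
      ∀ k, f k ≠ ⊥ → ∃ k', g k' ≠ ⊥ ∧ (f k).toReal + y k ≤ (g k').toReal + y k' := by
  refine iSup_le_iff.trans (forall_congr' fun k => ?_)
  induction hfk : f k using EReal.rec with
  | bot => simp
  | coe a =>
    simp only [← EReal.coe_add, coe_le_iSup_iff, coe_le_add_coe_iff (hg _), ne_eq,
      EReal.coe_ne_bot, not_false_eq_true, EReal.toReal_coe, true_implies]
  | top => exact absurd hfk (hf k)

theorem exists_int_toReal {a : EReal} (h : a ≠ ⊥ → a ≠ ⊤ → ∃ z : ℤ, a = ((z : ℝ) : EReal)) :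
    ∃ z : ℤ, a.toReal = z := by
  induction a using EReal.rec with
  | bot => exact ⟨0, by simp⟩
  | coe r =>
    obtain ⟨z, hz⟩ := h (EReal.coe_ne_bot r) (EReal.coe_ne_top r)
    exact ⟨z, by simpa using hz⟩
  | top => exact ⟨0, by simp⟩

theorem ne_top_of_int {a : EReal} (h : a ≠ ⊥ → ∃ z : ℤ, a = ((z : ℝ) : EReal)) : a ≠ ⊤ :=
  fun ha => by
    obtain ⟨z, hz⟩ := h (ha ▸ top_ne_bot)
    exact EReal.coe_ne_top _ (hz ▸ ha)

theorem ne_bot_of_int {a : EReal} (h : a ≠ ⊤ → ∃ z : ℤ, a = ((z : ℝ) : EReal)) : a ≠ ⊥ :=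
  fun ha => by
    obtain ⟨z, hz⟩ := h (ha ▸ bot_ne_top)
    exact EReal.coe_ne_bot _ (hz ▸ ha)

end EReal

namespace TropicalPseudoquadratic

variable {m n : ℕ} (C : Fin n → Fin n → EReal) (U V : Fin m → Fin n → EReal) (b d : Fin m → EReal)
  (p q : Fin n → EReal)

def IsFeasiblePoint (lam : ℝ) (x : Fin n → ℝ) : Prop :=
  (∀ i, (⨆ j, C i j + (x j : EReal)) ≤ (lam : EReal) + (x i : EReal)) ∧
  (∀ i, p i ≤ (lam : EReal) + (x i : EReal)) ∧
  (∀ i, q i ≠ ⊤ → (x i : EReal) ≤ (lam : EReal) + q i) ∧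
  (∀ i, ((⨆ j, U i j + (x j : EReal)) ⊔ b i) ≤ ((⨆ j, V i j + (x j : EReal)) ⊔ d i))

def feasibleValues : Set ℝ := {lam | ∃ x, IsFeasiblePoint C U V b d p q lam x}

/-- For every finite term of `U i ⊗ x ⊕ b i` (index `none` standing for `b i`), a choice of a
finite term of `V i ⊗ x ⊕ d i` meant to dominate it. -/
abbrev Choice : Type :=
  {σ : Fin m → Option (Fin n) → Option (Fin n) //
    ∀ i t, Option.elim' (b i) (U i) t ≠ ⊥ → Option.elim' (d i) (V i) (σ i t) ≠ ⊥}

abbrev Constraint : Type :=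
  {ij : Fin n × Fin n // C ij.1 ij.2 ≠ ⊥} ⊕ {i : Fin n // p i ≠ ⊥} ⊕ {i : Fin n // q i ≠ ⊤} ⊕
    {it : Fin m × Option (Fin n) // Option.elim' (b it.1) (U it.1) it.2 ≠ ⊥}

/-- The difference constraints on `(x₀, x) ∈ ℝ^{n+1}`, with `x₀ = x none` playing the role of the
constant `0`, that encode the problem once the dominating terms `σ` are fixed. -/
def system (σ : Fin m → Option (Fin n) → Option (Fin n)) :
    ParamDiffSystem (Option (Fin n)) (Constraint C U b p q) where
  src
    | .inl ⟨(_, j), _⟩ => some j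
    | .inr (.inl _) => none
    | .inr (.inr (.inl ⟨i, _⟩)) => some i
    | .inr (.inr (.inr ⟨(_, t), _⟩)) => t
  tgt
    | .inl ⟨(i, _), _⟩ => some i
    | .inr (.inl ⟨i, _⟩) => some i
    | .inr (.inr (.inl _)) => none
    | .inr (.inr (.inr ⟨(i, t), _⟩)) => σ i t
  cost
    | .inl ⟨(i, j), _⟩ => -(C i j).toReal
    | .inr (.inl ⟨i, _⟩) => -(p i).toReal
    | .inr (.inr (.inl ⟨i, _⟩)) => (q i).toReal
    | .inr (.inr (.inr ⟨(i, t), _⟩)) =>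
      (Option.elim' (d i) (V i) (σ i t)).toReal - (Option.elim' (b i) (U i) t).toReal
  slope
    | .inr (.inr (.inr _)) => 0
    | _ => 1

theorem system_slope_le_one (σ : Fin m → Option (Fin n) → Option (Fin n))
    (a : Constraint C U b p q) : (system C U V b d p q σ).slope a ≤ 1 := by
  rcases a with _ | _ | _ | _ <;> simp [system]

variable {C U V b d p q}

theorem exists_int_toReal_elim' {A : Fin m → Fin n → EReal} {c : Fin m → EReal}
    (hA : ∀ i j, A i j ≠ ⊥ → ∃ z : ℤ, A i j = ((z : ℝ) : EReal))
    (hc : ∀ i, c i ≠ ⊥ → ∃ z : ℤ, c i = ((z : ℝ) : EReal)) (i : Fin m) (t : Option (Fin n)) :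
    ∃ z : ℤ, (Option.elim' (c i) (A i) t).toReal = z := by
  cases t with
  | none => exact EReal.exists_int_toReal fun h _ => hc i h
  | some j => exact EReal.exists_int_toReal fun h _ => hA i j h

theorem system_cost_int
    (hCint : ∀ i j, C i j ≠ ⊥ → ∃ z : ℤ, C i j = ((z : ℝ) : EReal))
    (hUint : ∀ i j, U i j ≠ ⊥ → ∃ z : ℤ, U i j = ((z : ℝ) : EReal))
    (hVint : ∀ i j, V i j ≠ ⊥ → ∃ z : ℤ, V i j = ((z : ℝ) : EReal))
    (hbint : ∀ i, b i ≠ ⊥ → ∃ z : ℤ, b i = ((z : ℝ) : EReal))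
    (hdint : ∀ i, d i ≠ ⊥ → ∃ z : ℤ, d i = ((z : ℝ) : EReal))
    (hpint : ∀ i, p i ≠ ⊥ → ∃ z : ℤ, p i = ((z : ℝ) : EReal))
    (hqint : ∀ i, q i ≠ ⊤ → ∃ z : ℤ, q i = ((z : ℝ) : EReal))
    (σ : Fin m → Option (Fin n) → Option (Fin n)) (a : Constraint C U b p q) :
    ∃ z : ℤ, (system C U V b d p q σ).cost a = z := by
  rcases a with ⟨⟨i, j⟩, -⟩ | ⟨i, -⟩ | ⟨i, -⟩ | ⟨⟨i, t⟩, -⟩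
  · obtain ⟨z, hz⟩ := EReal.exists_int_toReal fun h _ => hCint i j h
    exact ⟨-z, by simp [system, hz]⟩
  · obtain ⟨z, hz⟩ := EReal.exists_int_toReal fun h _ => hpint i h
    exact ⟨-z, by simp [system, hz]⟩
  · obtain ⟨z, hz⟩ := EReal.exists_int_toReal fun _ h => hqint i h
    exact ⟨z, by simp [system, hz]⟩
  · obtain ⟨z, hz⟩ := exists_int_toReal_elim' hVint hdint i (σ i t)
    obtain ⟨z', hz'⟩ := exists_int_toReal_elim' hUint hbint i t
    exact ⟨z - z', by simp [system, hz, hz']⟩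

theorem iSup_add_coe_sup_eq (A : Fin m → Fin n → EReal) (c : Fin m → EReal) (i : Fin m)
    (x : Fin n → ℝ) :
    (⨆ j, A i j + (x j : EReal)) ⊔ c i =
      ⨆ t, Option.elim' (c i) (A i) t + ((Option.elim' 0 x t : ℝ) : EReal) := by
  rw [iSup_option, sup_comm]
  simp

theorem system_constraints_iff (σ : Fin m → Option (Fin n) → Option (Fin n)) (lam : ℝ)
    (x : Fin n → ℝ) :
    (∀ a, Option.elim' 0 x ((system C U V b d p q σ).src a) ≤
      Option.elim' 0 x ((system C U V b d p q σ).tgt a) + (system C U V b d p q σ).weight lam a) ↔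
    (∀ i j, C i j ≠ ⊥ → (C i j).toReal + x j ≤ lam + x i) ∧
    (∀ i, p i ≠ ⊥ → (p i).toReal ≤ lam + x i) ∧
    (∀ i, q i ≠ ⊤ → x i ≤ (q i).toReal + lam) ∧
    (∀ i t, Option.elim' (b i) (U i) t ≠ ⊥ →
      (Option.elim' (b i) (U i) t).toReal + Option.elim' 0 x t ≤
        (Option.elim' (d i) (V i) (σ i t)).toReal + Option.elim' 0 x (σ i t)) := by
  simp only [Sum.forall, Subtype.forall, Prod.forall, system, ParamDiffSystem.weight]
  simp only [Option.elim'_some, Option.elim'_none, Nat.cast_one, Nat.cast_zero, one_mul, zero_mul,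
    add_zero]
  refine and_congr (forall₂_congr fun _ _ => imp_congr_right fun _ => ?_) (and_congr
    (forall_congr' fun _ => imp_congr_right fun _ => ?_) (and_congr
    (forall_congr' fun _ => imp_congr_right fun _ => ?_)
    (forall₂_congr fun _ _ => imp_congr_right fun _ => ?_))) <;>
  constructor <;> intro h <;> linarith

theorem isFeasiblePoint_iff (hC : ∀ i j, C i j ≠ ⊤) (hU : ∀ i j, U i j ≠ ⊤)
    (hV : ∀ i j, V i j ≠ ⊤) (hb : ∀ i, b i ≠ ⊤) (hd : ∀ i, d i ≠ ⊤) (hp : ∀ i, p i ≠ ⊤)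
    (hq : ∀ i, q i ≠ ⊥) (lam : ℝ) (x : Fin n → ℝ) :
    IsFeasiblePoint C U V b d p q lam x ↔
    (∀ i j, C i j ≠ ⊥ → (C i j).toReal + x j ≤ lam + x i) ∧
    (∀ i, p i ≠ ⊥ → (p i).toReal ≤ lam + x i) ∧
    (∀ i, q i ≠ ⊤ → x i ≤ (q i).toReal + lam) ∧
    (∀ i t, Option.elim' (b i) (U i) t ≠ ⊥ → ∃ s, Option.elim' (d i) (V i) s ≠ ⊥ ∧
      (Option.elim' (b i) (U i) t).toReal + Option.elim' 0 x t ≤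
        (Option.elim' (d i) (V i) s).toReal + Option.elim' 0 x s) := by
  have hUb : ∀ i t, Option.elim' (b i) (U i) t ≠ ⊤ := fun i t => by cases t <;> simp [hU, hb]
  have hVd : ∀ i t, Option.elim' (d i) (V i) t ≠ ⊤ := fun i t => by cases t <;> simp [hV, hd]
  simp only [IsFeasiblePoint, ← EReal.coe_add, iSup_le_iff, EReal.add_coe_le_coe_iff (hC _ _),
    EReal.le_coe_iff_of_ne_top (hp _), iSup_add_coe_sup_eq,
    EReal.iSup_add_coe_le_iSup_add_coe_iff (hUb _) (hVd _)]
  refine and_congr Iff.rfl (and_congr Iff.rfl (and_congr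
    (forall_congr' fun i => imp_congr_right fun hqi => ?_) Iff.rfl))
  rw [add_comm (lam : EReal), EReal.coe_le_add_coe_iff hqi]
  exact and_iff_right (hq i)

theorem isFeasiblePoint_iff_exists_choice (hC : ∀ i j, C i j ≠ ⊤) (hU : ∀ i j, U i j ≠ ⊤)
    (hV : ∀ i j, V i j ≠ ⊤) (hb : ∀ i, b i ≠ ⊤) (hd : ∀ i, d i ≠ ⊤) (hp : ∀ i, p i ≠ ⊤)
    (hq : ∀ i, q i ≠ ⊥) (lam : ℝ) (x : Fin n → ℝ) :
    IsFeasiblePoint C U V b d p q lam x ↔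
    ∃ σ : Choice U V b d, ∀ a, Option.elim' 0 x ((system C U V b d p q σ.1).src a) ≤
      Option.elim' 0 x ((system C U V b d p q σ.1).tgt a) +
        (system C U V b d p q σ.1).weight lam a := by
  simp only [isFeasiblePoint_iff hC hU hV hb hd hp hq, system_constraints_iff]
  refine ⟨fun ⟨h₁, h₂, h₃, h₄⟩ => ?_, fun ⟨σ, h₁, h₂, h₃, h₄⟩ =>
    ⟨h₁, h₂, h₃, fun i t ht => ⟨σ.1 i t, σ.2 i t ht, h₄ i t ht⟩⟩⟩
  have : ∀ i t, ∃ s, Option.elim' (b i) (U i) t ≠ ⊥ → Option.elim' (d i) (V i) s ≠ ⊥ ∧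
      (Option.elim' (b i) (U i) t).toReal + Option.elim' 0 x t ≤
        (Option.elim' (d i) (V i) s).toReal + Option.elim' 0 x s := fun i t => by
    by_cases ht : Option.elim' (b i) (U i) t = ⊥
    · exact ⟨none, fun h => absurd ht h⟩
    · obtain ⟨s, hs⟩ := h₄ i t ht
      exact ⟨s, fun _ => hs⟩
  choose σ hσ using this
  exact ⟨⟨σ, fun i t ht => (hσ i t ht).1⟩, h₁, h₂, h₃, fun i t ht => (hσ i t ht).2⟩

theorem feasibleValues_eq_iUnion (hC : ∀ i j, C i j ≠ ⊤) (hU : ∀ i j, U i j ≠ ⊤)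
    (hV : ∀ i j, V i j ≠ ⊤) (hb : ∀ i, b i ≠ ⊤) (hd : ∀ i, d i ≠ ⊤) (hp : ∀ i, p i ≠ ⊤)
    (hq : ∀ i, q i ≠ ⊥) :
    feasibleValues C U V b d p q =
      ⋃ σ : Choice U V b d, (system C U V b d p q σ.1).feasibleSet := by
  ext lam
  simp only [feasibleValues, mem_ofPred_eq, mem_iUnion, ParamDiffSystem.mem_feasibleSet_iff_option,
    isFeasiblePoint_iff_exists_choice hC hU hV hb hd hp hq]
  exact exists_comm

end TropicalPseudoquadratic

open TropicalPseudoquadratic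

theorem stmt12 (m n : ℕ) (C : Fin n → Fin n → EReal)
    (U V : Fin m → Fin n → EReal) (b d : Fin m → EReal) (p q : Fin n → EReal)
    (hCint : ∀ i j, C i j ≠ ⊥ → ∃ z : ℤ, C i j = ((z : ℝ) : EReal))
    (hUint : ∀ i j, U i j ≠ ⊥ → ∃ z : ℤ, U i j = ((z : ℝ) : EReal))
    (hVint : ∀ i j, V i j ≠ ⊥ → ∃ z : ℤ, V i j = ((z : ℝ) : EReal))
    (hbint : ∀ i, b i ≠ ⊥ → ∃ z : ℤ, b i = ((z : ℝ) : EReal))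
    (hdint : ∀ i, d i ≠ ⊥ → ∃ z : ℤ, d i = ((z : ℝ) : EReal))
    (hpint : ∀ i, p i ≠ ⊥ → ∃ z : ℤ, p i = ((z : ℝ) : EReal))
    (hqint : ∀ i, q i ≠ ⊤ → ∃ z : ℤ, q i = ((z : ℝ) : EReal))
    (Λ : Set ℝ)
    (hΛ : Λ = {lam : ℝ | ∃ x : Fin n → ℝ,
        (∀ i, (⨆ j, C i j + (x j : EReal)) ≤ (lam : EReal) + (x i : EReal)) ∧
        (∀ i, p i ≤ (lam : EReal) + (x i : EReal)) ∧
        (∀ i, q i ≠ ⊤ → (x i : EReal) ≤ (lam : EReal) + q i) ∧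
        (∀ i, ((⨆ j, U i j + (x j : EReal)) ⊔ b i) ≤
              ((⨆ j, V i j + (x j : EReal)) ⊔ d i))})
    (hne : Λ.Nonempty) (hbdd : BddBelow Λ) :
    ∃ k : ℕ, 1 ≤ k ∧ k ≤ n + 1 ∧ ∃ z : ℤ, (k : ℝ) * sInf Λ = (z : ℝ) := by
  have hunion : Λ = ⋃ σ : Choice U V b d, (system C U V b d p q σ.1).feasibleSet :=
    hΛ.trans <| feasibleValues_eq_iUnion (fun i j => EReal.ne_top_of_int (hCint i j))
      (fun i j => EReal.ne_top_of_int (hUint i j)) (fun i j => EReal.ne_top_of_int (hVint i j))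
      (fun i => EReal.ne_top_of_int (hbint i)) (fun i => EReal.ne_top_of_int (hdint i))
      (fun i => EReal.ne_top_of_int (hpint i)) (fun i => EReal.ne_bot_of_int (hqint i))
  subst hunion
  refine csInf_iUnion_mem_of_eq_Ici (R := {r | HasDenomLE (n + 1) r})
    (fun σ hσne hσbdd => ?_) hne hbdd
  simpa using (system C U V b d p q σ.1).exists_feasibleSet_eq_Ici_hasDenomLE
    (system_cost_int hCint hUint hVint hbint hdint hpint hqint σ.1)
    (system_slope_le_one C U V b d p q σ.1) hσne hσbdd
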